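/- arXiv:1507.05386 — 6 statements merged into one kernel-verified Lean document; each statement's English description precedes it below -/
import Mathlib

section
/- If A := 1 + a_i a_j ≠ 0 in F_d, then C_{mn}(a_i) C_{nm}(a_j) = (D_m(A^{-1}) ⊗ D_n(A)) C_{nm}(A a_j) C_{mn}(A^{-1} a_i) on two qudits m, n. -/
open Kronecker

/-- `D(a)|x⟩ = |a x⟩`. -/
def Dop {F : Type*} [Field F] [Fintype F] [DecidableEq F] (a : F) : Matrix F F ℂ :=
  Matrix.of fun x y => if x = a * y then 1 else 0

/-- `C_{mn}(a)|x,y⟩ = |x, y + a x⟩` (first factor m is control, second factor n is target). -/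
def Cmn {F : Type*} [Field F] [Fintype F] [DecidableEq F] (a : F) :
    Matrix (F × F) (F × F) ℂ :=
  Matrix.of fun p q => if p.1 = q.1 ∧ p.2 = q.2 + a * q.1 then 1 else 0

/-- `C_{nm}(a)|x,y⟩ = |x + a y, y⟩` (second factor n is control, first factor m is target). -/
def Cnm {F : Type*} [Field F] [Fintype F] [DecidableEq F] (a : F) :
    Matrix (F × F) (F × F) ℂ :=
  Matrix.of fun p q => if p.1 = q.1 + a * q.2 ∧ p.2 = q.2 then 1 else 0

/-- Matrices of the form `[p = f q]` multiply by composing the functions. -/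
lemma funMat_mul {α : Type*} [Fintype α] [DecidableEq α] (f g : α → α) :
    (Matrix.of fun p q => if p = f q then (1 : ℂ) else 0)
      * (Matrix.of fun p q => if p = g q then (1 : ℂ) else 0)
    = Matrix.of fun p q => if p = f (g q) then (1 : ℂ) else 0 := by
  ext p q
  simp [Matrix.mul_apply, eq_comm]

theorem Cmn_Cnm_of_ne_zero {F : Type*} [Field F] [Fintype F] [DecidableEq F]
    (a_i a_j : F) (A : F) (hA : A = 1 + a_i * a_j) (h : A ≠ 0) :
    Cmn a_i * Cnm a_j
      = (Dop A⁻¹ ⊗ₖ Dop A) * Cnm (A * a_j) * Cmn (A⁻¹ * a_i) := by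
  have hCmn : ∀ a : F, Cmn a = Matrix.of fun p q : F × F =>
      if p = (q.1, q.2 + a * q.1) then (1 : ℂ) else 0 := by
    intro a; ext p q; simp [Cmn, Prod.ext_iff]
  have hCnm : ∀ a : F, Cnm a = Matrix.of fun p q : F × F =>
      if p = (q.1 + a * q.2, q.2) then (1 : ℂ) else 0 := by
    intro a; ext p q; simp [Cnm, Prod.ext_iff]
  have hD : (Dop A⁻¹ ⊗ₖ Dop A : Matrix (F × F) (F × F) ℂ)
      = Matrix.of fun p q : F × F => if p = (A⁻¹ * q.1, A * q.2) then (1 : ℂ) else 0 := by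
    ext p q
    simp only [Dop, Matrix.kroneckerMap_apply, Matrix.of_apply, Prod.ext_iff, ite_and]
    by_cases h1 : p.1 = A⁻¹ * q.1 <;> by_cases h2 : p.2 = A * q.2 <;> simp [h1, h2]
  rw [hCmn, hCnm, hD, hCnm, hCmn, funMat_mul, funMat_mul, funMat_mul]
  ext p q
  have key : (q.1 + a_j * q.2, q.2 + a_i * (q.1 + a_j * q.2))
      = (A⁻¹ * ((q.1, q.2 + A⁻¹ * a_i * q.1).1 + A * a_j * (q.1, q.2 + A⁻¹ * a_i * q.1).2),
         A * (q.1, q.2 + A⁻¹ * a_i * q.1).2) := by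
    have hAinv : A⁻¹ * A = 1 := inv_mul_cancel₀ h
    simp only [Prod.mk.injEq]
    constructor
    · field_simp
      ring_nf
      rw [hA]; ring
    · field_simp
      rw [hA]; ring
  simp only [Matrix.of_apply]
  rw [key]
end

section
/- If 1 + a_i a_j = 0 in F_d (so a_j ≠ 0), then C_{mn}(a_i) C_{nm}(a_j) = W_{mn} (D_m(a_i) ⊗ D_n(a_j)) C_{mn}(a_j^{-1}), where W_{mn} is the swap operator exchanging the two tensor factors. -/
open Kronecker

/-- The swap operator W, exchanging the two tensor factors. -/
def Wswap {F : Type*} [Fintype F] [DecidableEq F] : Matrix (F × F) (F × F) ℂ :=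
  Matrix.of fun p q => if p.1 = q.2 ∧ p.2 = q.1 then 1 else 0

theorem Cmn_Cnm_of_eq_zero {F : Type*} [Field F] [Fintype F] [DecidableEq F]
    (a_i a_j : F) (h : 1 + a_i * a_j = 0) :
    Cmn a_i * Cnm a_j
      = Wswap * (Dop a_i ⊗ₖ Dop a_j) * Cmn a_j⁻¹ := by
  have haj : a_j ≠ 0 := by rintro rfl; simp at h
  ext ⟨p1, p2⟩ ⟨q1, q2⟩
  simp only [Matrix.mul_apply, Cmn, Cnm, Wswap, Dop, Matrix.kroneckerMap_apply, Matrix.of_apply,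
    ite_mul, one_mul, zero_mul, mul_ite, mul_one, mul_zero, Fintype.sum_prod_type,
    Finset.sum_ite_eq, Finset.sum_ite_eq', Finset.mem_univ, if_true, ite_and]
  simp only [Finset.sum_ite_irrel, Finset.sum_const_zero, Finset.sum_ite_eq', Finset.mem_univ, if_true]
  have e1 : a_j * (q2 + a_j⁻¹ * q1) = q1 + a_j * q2 := by field_simp; ring
  have e2 : q2 + a_i * (q1 + a_j * q2) = a_i * q1 := by linear_combination q2 * h
  rw [e1, e2]
end

section
/- Let d = p^n be a prime power with d > 2 and let r ∈ F_d with r ≠ 0 and r ≠ 1. Then the 4-qudit state |ψ(r)⟩ = d^{-1} Σ_{i,k ∈ F_d} |i, i + r k, k, i + k⟩ is maximally entangled: for every bipartition of the four systems into two pairs, the reduced density matrix on each pair is the maximally mixed state (1/d²) I_{d²}. -/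
/-- Reduced density matrix of a 4-partite pure state `ψ` on systems 1,2
(tracing out systems 3,4). -/
noncomputable def red12 {I : Type*} [Fintype I] (ψ : I × I × I × I → ℂ) :
    Matrix (I × I) (I × I) ℂ :=
  Matrix.of fun p q => ∑ c : I, ∑ e : I,
    ψ (p.1, p.2, c, e) * star (ψ (q.1, q.2, c, e))

/-- Reduced density matrix on systems 3,4. -/
noncomputable def red34 {I : Type*} [Fintype I] (ψ : I × I × I × I → ℂ) :
    Matrix (I × I) (I × I) ℂ :=
  Matrix.of fun p q => ∑ a : I, ∑ b : I,
    ψ (a, b, p.1, p.2) * star (ψ (a, b, q.1, q.2))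

/-- Reduced density matrix on systems 1,3. -/
noncomputable def red13 {I : Type*} [Fintype I] (ψ : I × I × I × I → ℂ) :
    Matrix (I × I) (I × I) ℂ :=
  Matrix.of fun p q => ∑ b : I, ∑ e : I,
    ψ (p.1, b, p.2, e) * star (ψ (q.1, b, q.2, e))

/-- Reduced density matrix on systems 2,4. -/
noncomputable def red24 {I : Type*} [Fintype I] (ψ : I × I × I × I → ℂ) :
    Matrix (I × I) (I × I) ℂ :=
  Matrix.of fun p q => ∑ a : I, ∑ c : I,
    ψ (a, p.1, c, p.2) * star (ψ (a, q.1, c, q.2))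

/-- Reduced density matrix on systems 1,4. -/
noncomputable def red14 {I : Type*} [Fintype I] (ψ : I × I × I × I → ℂ) :
    Matrix (I × I) (I × I) ℂ :=
  Matrix.of fun p q => ∑ b : I, ∑ c : I,
    ψ (p.1, b, c, p.2) * star (ψ (q.1, b, c, q.2))

/-- Reduced density matrix on systems 2,3. -/
noncomputable def red23 {I : Type*} [Fintype I] (ψ : I × I × I × I → ℂ) :
    Matrix (I × I) (I × I) ℂ :=
  Matrix.of fun p q => ∑ a : I, ∑ e : I,
    ψ (a, p.1, p.2, e) * star (ψ (a, q.1, q.2, e))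

/-- A 4-partite pure state is maximally entangled if, for each of the three
bipartitions into two pairs {12|34}, {13|24}, {14|23}, the reduced density
matrix on each pair is the maximally mixed state `(1/d²) I`. -/
def IsMaxEnt {I : Type*} [Fintype I] [DecidableEq I] (ψ : I × I × I × I → ℂ) : Prop :=
  red12 ψ = ((Fintype.card I : ℂ) ^ 2)⁻¹ • 1 ∧
  red34 ψ = ((Fintype.card I : ℂ) ^ 2)⁻¹ • 1 ∧
  red13 ψ = ((Fintype.card I : ℂ) ^ 2)⁻¹ • 1 ∧
  red24 ψ = ((Fintype.card I : ℂ) ^ 2)⁻¹ • 1 ∧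
  red14 ψ = ((Fintype.card I : ℂ) ^ 2)⁻¹ • 1 ∧
  red23 ψ = ((Fintype.card I : ℂ) ^ 2)⁻¹ • 1

/-- The graph state `|ψ(r)⟩ = d⁻¹ Σ_{i,k} |i, i + r k, k, i + k⟩` over a finite field. -/
noncomputable def psiR {F : Type*} [Field F] [Fintype F] [DecidableEq F] (r : F) :
    F × F × F × F → ℂ :=
  fun p => if p.2.1 = p.1 + r * p.2.2.1 ∧ p.2.2.2 = p.1 + p.2.2.1
    then (Fintype.card F : ℂ)⁻¹ else 0


lemma offdiag_eval {α : Type*} [Fintype α] (P Q : α → α → Prop)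
    [∀ c e, Decidable (P c e)] [∀ c e, Decidable (Q c e)] (v w : ℂ)
    (h : ∀ c e, ¬(P c e ∧ Q c e)) :
    (∑ c, ∑ e, (if P c e then v else 0) * (if Q c e then w else 0)) = 0 := by
  refine Finset.sum_eq_zero fun c _ => Finset.sum_eq_zero fun e _ => ?_
  by_cases h1 : P c e
  · rw [if_neg (fun h2 => h c e ⟨h1, h2⟩), mul_zero]
  · rw [if_neg h1, zero_mul]

lemma diag_eval {α : Type*} [Fintype α] [DecidableEq α] (P : α → α → Prop)
    [∀ c e, Decidable (P c e)] (v : ℂ) (c₀ e₀ : α)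
    (h : ∀ c e, P c e ↔ c = c₀ ∧ e = e₀) :
    (∑ c, ∑ e, (if P c e then v else 0) * (if P c e then v else 0)) = v * v := by
  simp only [h, ite_mul, zero_mul, mul_ite, mul_zero]
  simp [Finset.sum_ite_eq', ite_and]

lemma star_psiR {F : Type*} [Field F] [Fintype F] [DecidableEq F] (r : F) (t : F × F × F × F) :
    star (psiR r t) = psiR r t := by
  unfold psiR; split <;> simp


theorem psiR_isMaxEnt {F : Type*} [Field F] [Fintype F] [DecidableEq F]
    (hd : 2 < Fintype.card F) (r : F) (hr0 : r ≠ 0) (hr1 : r ≠ 1) :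
    IsMaxEnt (psiR r) := by
  have hr1' : r - 1 ≠ 0 := sub_ne_zero.2 hr1
  have hii : ((Fintype.card F : ℂ))⁻¹ * ((Fintype.card F : ℂ))⁻¹
      = ((Fintype.card F : ℂ) ^ 2)⁻¹ := by rw [sq, mul_inv]
  refine ⟨?_, ?_, ?_, ?_, ?_, ?_⟩
  · -- red12
    ext ⟨x1, x2⟩ ⟨y1, y2⟩
    simp only [red12, Matrix.of_apply, star_psiR]
    simp only [psiR, Matrix.smul_apply, Matrix.one_apply, Prod.mk.injEq,
      smul_ite, smul_zero, smul_eq_mul, mul_one]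
    by_cases hpq : x1 = y1 ∧ x2 = y2
    · obtain ⟨rfl, rfl⟩ := hpq
      rw [if_pos ⟨rfl, rfl⟩, mul_one, ← hii]
      exact diag_eval (fun u v => x2 = x1 + r * u ∧ v = x1 + u) _ (r⁻¹ * (x2 - x1)) (x1 + r⁻¹ * (x2 - x1)) (fun u v => by
        constructor
        · rintro ⟨h1, h2⟩
          have hc : u = r⁻¹ * (x2 - x1) := by field_simp; linear_combination -h1
          exact ⟨hc, by rw [h2, hc]⟩
        · rintro ⟨rfl, rfl⟩
          constructor <;> (try field_simp) <;> (try ring)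
      )
    · rw [if_neg hpq, mul_zero]
      refine offdiag_eval (fun u v => x2 = x1 + r * u ∧ v = x1 + u) (fun u v => y2 = y1 + r * u ∧ v = y1 + u) _ _ (fun u v h => hpq ?_)
      obtain ⟨⟨h1, h2⟩, h3, h4⟩ := h
      have ha : x1 = y1 := by linear_combination h4 - h2
      exact ⟨ha, by rw [h1, h3, ha]⟩
  · -- red34
    ext ⟨x1, x2⟩ ⟨y1, y2⟩
    simp only [red34, Matrix.of_apply, star_psiR]
    simp only [psiR, Matrix.smul_apply, Matrix.one_apply, Prod.mk.injEq,
      smul_ite, smul_zero, smul_eq_mul, mul_one]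
    by_cases hpq : x1 = y1 ∧ x2 = y2
    · obtain ⟨rfl, rfl⟩ := hpq
      rw [if_pos ⟨rfl, rfl⟩, mul_one, ← hii]
      exact diag_eval (fun u v => v = u + r * x1 ∧ x2 = u + x1) _ (x2 - x1) (x2 - x1 + r * x1) (fun u v => by
        constructor
        · rintro ⟨h1, h2⟩
          have ha : u = x2 - x1 := by linear_combination -h2
          exact ⟨ha, by rw [h1, ha]⟩
        · rintro ⟨rfl, rfl⟩
          constructor <;> (try field_simp) <;> (try ring)
      )
    · rw [if_neg hpq, mul_zero]
      refine offdiag_eval (fun u v => v = u + r * x1 ∧ x2 = u + x1) (fun u v => v = u + r * y1 ∧ y2 = u + y1) _ _ (fun u v h => hpq ?_)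
      obtain ⟨⟨h1, h2⟩, h3, h4⟩ := h
      have hc : x1 = y1 := by
        have h5 : r * x1 = r * y1 := by linear_combination h3 - h1
        exact mul_left_cancel₀ hr0 h5
      refine ⟨hc, ?_⟩
      rw [h2, h4, hc]
  · -- red13
    ext ⟨x1, x2⟩ ⟨y1, y2⟩
    simp only [red13, Matrix.of_apply, star_psiR]
    simp only [psiR, Matrix.smul_apply, Matrix.one_apply, Prod.mk.injEq,
      smul_ite, smul_zero, smul_eq_mul, mul_one]
    by_cases hpq : x1 = y1 ∧ x2 = y2
    · obtain ⟨rfl, rfl⟩ := hpq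
      rw [if_pos ⟨rfl, rfl⟩, mul_one, ← hii]
      exact diag_eval (fun u v => u = x1 + r * x2 ∧ v = x1 + x2) _ (x1 + r * x2) (x1 + x2) (fun u v => by
        constructor
        · rintro ⟨h1, h2⟩
          exact ⟨h1, h2⟩
        · rintro ⟨rfl, rfl⟩
          constructor <;> (try field_simp) <;> (try ring)
      )
    · rw [if_neg hpq, mul_zero]
      refine offdiag_eval (fun u v => u = x1 + r * x2 ∧ v = x1 + x2) (fun u v => u = y1 + r * y2 ∧ v = y1 + y2) _ _ (fun u v h => hpq ?_)
      obtain ⟨⟨h1, h2⟩, h3, h4⟩ := h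
      have hc : x2 = y2 := by
        have h5 : (r - 1) * x2 = (r - 1) * y2 := by
          linear_combination h3 - h1 + h2 - h4
        exact mul_left_cancel₀ hr1' h5
      refine ⟨?_, hc⟩
      linear_combination h4 - h2 - hc
  · -- red24
    ext ⟨x1, x2⟩ ⟨y1, y2⟩
    simp only [red24, Matrix.of_apply, star_psiR]
    simp only [psiR, Matrix.smul_apply, Matrix.one_apply, Prod.mk.injEq,
      smul_ite, smul_zero, smul_eq_mul, mul_one]
    by_cases hpq : x1 = y1 ∧ x2 = y2
    · obtain ⟨rfl, rfl⟩ := hpq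
      rw [if_pos ⟨rfl, rfl⟩, mul_one, ← hii]
      exact diag_eval (fun u v => x1 = u + r * v ∧ x2 = u + v) _ (x2 - (r - 1)⁻¹ * (x1 - x2)) ((r - 1)⁻¹ * (x1 - x2)) (fun u v => by
        constructor
        · rintro ⟨h1, h2⟩
          have he : v = (r - 1)⁻¹ * (x1 - x2) := by
            field_simp
            linear_combination h2 - h1
          exact ⟨by rw [he] at h2; linear_combination -h2, he⟩
        · rintro ⟨rfl, rfl⟩
          constructor <;> (try field_simp) <;> (try ring)
      )
    · rw [if_neg hpq, mul_zero]
      refine offdiag_eval (fun u v => x1 = u + r * v ∧ x2 = u + v) (fun u v => y1 = u + r * v ∧ y2 = u + v) _ _ (fun u v h => hpq ?_)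
      obtain ⟨⟨h1, h2⟩, h3, h4⟩ := h
      exact ⟨h1.trans h3.symm, h2.trans h4.symm⟩
  · -- red14
    ext ⟨x1, x2⟩ ⟨y1, y2⟩
    simp only [red14, Matrix.of_apply, star_psiR]
    simp only [psiR, Matrix.smul_apply, Matrix.one_apply, Prod.mk.injEq,
      smul_ite, smul_zero, smul_eq_mul, mul_one]
    by_cases hpq : x1 = y1 ∧ x2 = y2
    · obtain ⟨rfl, rfl⟩ := hpq
      rw [if_pos ⟨rfl, rfl⟩, mul_one, ← hii]
      exact diag_eval (fun u v => u = x1 + r * v ∧ x2 = x1 + v) _ (x1 + r * (x2 - x1)) (x2 - x1) (fun u v => by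
        constructor
        · rintro ⟨h1, h2⟩
          have he : v = x2 - x1 := by linear_combination -h2
          exact ⟨by rw [h1, he], he⟩
        · rintro ⟨rfl, rfl⟩
          constructor <;> (try field_simp) <;> (try ring)
      )
    · rw [if_neg hpq, mul_zero]
      refine offdiag_eval (fun u v => u = x1 + r * v ∧ x2 = x1 + v) (fun u v => u = y1 + r * v ∧ y2 = y1 + v) _ _ (fun u v h => hpq ?_)
      obtain ⟨⟨h1, h2⟩, h3, h4⟩ := h
      have ha : x1 = y1 := by linear_combination h3 - h1
      refine ⟨ha, ?_⟩
      linear_combination h2 - h4 + ha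
  · -- red23
    ext ⟨x1, x2⟩ ⟨y1, y2⟩
    simp only [red23, Matrix.of_apply, star_psiR]
    simp only [psiR, Matrix.smul_apply, Matrix.one_apply, Prod.mk.injEq,
      smul_ite, smul_zero, smul_eq_mul, mul_one]
    by_cases hpq : x1 = y1 ∧ x2 = y2
    · obtain ⟨rfl, rfl⟩ := hpq
      rw [if_pos ⟨rfl, rfl⟩, mul_one, ← hii]
      exact diag_eval (fun u v => x1 = u + r * x2 ∧ v = u + x2) _ (x1 - r * x2) (x1 - r * x2 + x2) (fun u v => by
        constructor
        · rintro ⟨h1, h2⟩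
          have ha : u = x1 - r * x2 := by linear_combination -h1
          exact ⟨ha, by rw [h2, ha]⟩
        · rintro ⟨rfl, rfl⟩
          constructor <;> (try field_simp) <;> (try ring)
      )
    · rw [if_neg hpq, mul_zero]
      refine offdiag_eval (fun u v => x1 = u + r * x2 ∧ v = u + x2) (fun u v => y1 = u + r * y2 ∧ v = u + y2) _ _ (fun u v h => hpq ?_)
      obtain ⟨⟨h1, h2⟩, h3, h4⟩ := h
      have hc : x2 = y2 := by linear_combination h4 - h2
      refine ⟨?_, hc⟩
      rw [h1, h3, hc]
end

section
/- For any odd integer d ≥ 3, the 4-qudit state |P'⟩ = d^{-1} Σ_{i,k ∈ ℤ_d} |i, i − k, k, i + k⟩ is maximally entangled, i.e., each two-party reduced density matrix from any bipartition into two pairs equals (1/d²) I. -/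
/-- The state `|P'⟩ = d⁻¹ Σ_{i,k} |i, i − k, k, i + k⟩` over `ℤ_d`. -/
noncomputable def Pprime (d : ℕ) [NeZero d] : ZMod d × ZMod d × ZMod d × ZMod d → ℂ :=
  fun p => if p.2.1 = p.1 - p.2.2.1 ∧ p.2.2.2 = p.1 + p.2.2.1 then (d : ℂ)⁻¹ else 0

private lemma Pp_aux (d : ℕ) {p q : Prop} [Decidable p] [Decidable q] (h : p ↔ q) :
    (d:ℂ)⁻¹ * star (if p then (d:ℂ)⁻¹ else 0) = if q then ((d:ℂ)^2)⁻¹ else 0 := by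
  simp only [h]; split_ifs with hp
  · rw [star_inv₀, star_natCast, sq, mul_inv]
  · simp

theorem Pprime_isMaxEnt_of_odd (d : ℕ) [NeZero d] (hd : 3 ≤ d) (hodd : Odd d) :
    IsMaxEnt (Pprime d) := by
  have hcard : (Fintype.card (ZMod d) : ℂ) = d := by simp [ZMod.card]
  have h2u : IsUnit (2 : ZMod d) := by
    have h2 : ((2:ℕ) : ZMod d) = 2 := by norm_cast
    rw [← h2, ZMod.isUnit_iff_coprime]
    simpa [Nat.coprime_comm] using hodd.coprime_two_right
  have hu : (2:ZMod d) * (2:ZMod d)⁻¹ = 1 := ZMod.mul_inv_of_unit 2 h2u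
  refine ⟨?_, ?_, ?_, ?_, ?_, ?_⟩
  · -- red12
    ext ⟨a, b⟩ ⟨a', b'⟩
    simp only [red12, Pprime, Matrix.of_apply, Matrix.smul_apply, Matrix.one_apply,
      smul_eq_mul, hcard, mul_ite, mul_one, mul_zero]
    rw [Fintype.sum_eq_single (a - b) (fun c hc => Finset.sum_eq_zero fun e _ => by
      rw [if_neg, zero_mul]
      rintro ⟨h1, -⟩
      exact hc (by rw [h1, sub_sub_cancel]))]
    rw [Fintype.sum_eq_single (a + (a - b)) (fun e he => by
      rw [if_neg, zero_mul]
      rintro ⟨-, h2⟩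
      exact he h2)]
    rw [if_pos ⟨(sub_sub_cancel a b).symm, rfl⟩]
    refine Pp_aux d ⟨fun ⟨h1, h2⟩ => ?_, fun h => ?_⟩
    · obtain rfl : a = a' := add_right_cancel h2
      exact Prod.ext rfl (by linear_combination -h1)
    · obtain ⟨rfl, rfl⟩ := Prod.mk.injEq .. ▸ h
      exact ⟨(sub_sub_cancel a b).symm, rfl⟩
  · -- red34
    ext ⟨c, e⟩ ⟨c', e'⟩
    simp only [red34, Pprime, Matrix.of_apply, Matrix.smul_apply, Matrix.one_apply,
      smul_eq_mul, hcard, mul_ite, mul_one, mul_zero]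
    rw [Fintype.sum_eq_single (e - c) (fun a ha => Finset.sum_eq_zero fun b _ => by
      rw [if_neg, zero_mul]
      rintro ⟨-, h2⟩
      exact ha (by rw [h2, add_sub_cancel_right]))]
    rw [Fintype.sum_eq_single ((e - c) - c) (fun b hb => by
      rw [if_neg, zero_mul]
      rintro ⟨h1, -⟩
      exact hb h1)]
    rw [if_pos ⟨rfl, by abel⟩]
    refine Pp_aux d ⟨fun ⟨h1, h2⟩ => ?_, fun h => ?_⟩
    · obtain rfl : c = c' := by linear_combination -h1
      exact Prod.ext rfl (by linear_combination -h2)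
    · obtain ⟨rfl, rfl⟩ := Prod.mk.injEq .. ▸ h
      exact ⟨rfl, by abel⟩
  · -- red13
    ext ⟨a, c⟩ ⟨a', c'⟩
    simp only [red13, Pprime, Matrix.of_apply, Matrix.smul_apply, Matrix.one_apply,
      smul_eq_mul, hcard, mul_ite, mul_one, mul_zero]
    rw [Fintype.sum_eq_single (a - c) (fun b hb => Finset.sum_eq_zero fun e _ => by
      rw [if_neg, zero_mul]
      rintro ⟨h1, -⟩
      exact hb h1)]
    rw [Fintype.sum_eq_single (a + c) (fun e he => by
      rw [if_neg, zero_mul]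
      rintro ⟨-, h2⟩
      exact he h2)]
    rw [if_pos ⟨rfl, rfl⟩]
    refine Pp_aux d ⟨fun ⟨h1, h2⟩ => ?_, fun h => ?_⟩
    · obtain rfl : a = a' := by
        linear_combination (2:ZMod d)⁻¹ * h1 + (2:ZMod d)⁻¹ * h2 - (a - a') * hu
      exact Prod.ext rfl (by linear_combination h2)
    · obtain ⟨rfl, rfl⟩ := Prod.mk.injEq .. ▸ h
      exact ⟨rfl, rfl⟩
  · -- red24
    ext ⟨b, e⟩ ⟨b', e'⟩
    simp only [red24, Pprime, Matrix.of_apply, Matrix.smul_apply, Matrix.one_apply,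
      smul_eq_mul, hcard, mul_ite, mul_one, mul_zero]
    rw [Fintype.sum_eq_single ((2:ZMod d)⁻¹ * (b + e))
      (fun a ha => Finset.sum_eq_zero fun c _ => by
        rw [if_neg, zero_mul]
        rintro ⟨h1, h2⟩
        exact ha (by linear_combination -(2:ZMod d)⁻¹ * h1 - (2:ZMod d)⁻¹ * h2 - a * hu))]
    rw [Fintype.sum_eq_single (e - (2:ZMod d)⁻¹ * (b + e)) (fun c hc => by
      rw [if_neg, zero_mul]
      rintro ⟨-, h2⟩
      exact hc (by linear_combination -h2))]
    rw [if_pos ⟨by linear_combination -(b + e) * hu, by abel⟩]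
    refine Pp_aux d ⟨fun ⟨h1, h2⟩ => ?_, fun h => ?_⟩
    · obtain rfl : e = e' := by linear_combination -h2
      exact Prod.ext (by linear_combination -h1 - (b + e) * hu) rfl
    · obtain ⟨rfl, rfl⟩ := Prod.mk.injEq .. ▸ h
      exact ⟨by linear_combination -(b + e) * hu, by abel⟩
  · -- red14
    ext ⟨a, e⟩ ⟨a', e'⟩
    simp only [red14, Pprime, Matrix.of_apply, Matrix.smul_apply, Matrix.one_apply,
      smul_eq_mul, hcard, mul_ite, mul_one, mul_zero]
    rw [Fintype.sum_eq_single (a - (e - a)) (fun b hb => Finset.sum_eq_zero fun c _ => by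
      rw [if_neg, zero_mul]
      rintro ⟨h1, h2⟩
      exact hb (by linear_combination h1 + h2))]
    rw [Fintype.sum_eq_single (e - a) (fun c hc => by
      rw [if_neg, zero_mul]
      rintro ⟨-, h2⟩
      exact hc (by linear_combination -h2))]
    rw [if_pos ⟨rfl, by abel⟩]
    refine Pp_aux d ⟨fun ⟨h1, h2⟩ => ?_, fun h => ?_⟩
    · obtain rfl : a = a' := by linear_combination h1
      exact Prod.ext rfl (by linear_combination -h2)
    · obtain ⟨rfl, rfl⟩ := Prod.mk.injEq .. ▸ h
      exact ⟨rfl, by abel⟩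
  · -- red23
    ext ⟨b, c⟩ ⟨b', c'⟩
    simp only [red23, Pprime, Matrix.of_apply, Matrix.smul_apply, Matrix.one_apply,
      smul_eq_mul, hcard, mul_ite, mul_one, mul_zero]
    rw [Fintype.sum_eq_single (b + c) (fun a ha => Finset.sum_eq_zero fun e _ => by
      rw [if_neg, zero_mul]
      rintro ⟨h1, -⟩
      exact ha (by linear_combination -h1))]
    rw [Fintype.sum_eq_single ((b + c) + c) (fun e he => by
      rw [if_neg, zero_mul]
      rintro ⟨-, h2⟩
      exact he h2)]
    rw [if_pos ⟨by abel, rfl⟩]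
    refine Pp_aux d ⟨fun ⟨h1, h2⟩ => ?_, fun h => ?_⟩
    · obtain rfl : c = c' := add_left_cancel h2
      exact Prod.ext (by linear_combination -h1) rfl
    · obtain ⟨rfl, rfl⟩ := Prod.mk.injEq .. ▸ h
      exact ⟨by abel, rfl⟩
end

section
/- For any even integer d ≥ 2, the 4-qudit state |P'⟩ = d^{-1} Σ_{i,k ∈ ℤ_d} |i, i − k, k, i + k⟩ is NOT maximally entangled: at least one bipartite reduced density matrix from a pair bipartition is not maximally mixed. -/
theorem Pprime_not_maxEnt_of_even (d : ℕ) [NeZero d] (hd : 2 ≤ d) (heven : Even d) :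
    ¬ IsMaxEnt (Pprime d) := by
  rintro ⟨-, -, h13, -⟩
  obtain ⟨t, ht⟩ := heven
  have htpos : 0 < t := by omega
  set m : ZMod d := ((t : ℕ) : ZMod d) with hm
  have hm0 : m ≠ 0 := by
    rw [hm, Ne, ZMod.natCast_eq_zero_iff]
    intro h
    have := Nat.le_of_dvd htpos h
    omega
  have hmm : m + m = 0 := by
    rw [hm, ← Nat.cast_add, ← ht, ZMod.natCast_self]
  have key := congrFun (congrFun h13 ((0 : ZMod d), (0 : ZMod d))) (m, m)
  have hne : ((0 : ZMod d), (0 : ZMod d)) ≠ (m, m) := by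
    intro h
    exact hm0 (congrArg Prod.fst h).symm
  have hdC : (d : ℂ) ≠ 0 := Nat.cast_ne_zero.mpr (NeZero.ne d)
  simp only [red13, Pprime, Matrix.of_apply, Matrix.smul_apply, Matrix.one_apply,
    if_neg hne, smul_zero, sub_self, hmm, sub_zero, add_zero, zero_sub, zero_add] at key
  rw [Finset.sum_eq_single (0 : ZMod d)] at key
  · rw [Finset.sum_eq_single (0 : ZMod d)] at key
    · simp only [and_self, if_pos rfl, if_true, eq_self_iff_true, true_and] at key
      exact (mul_ne_zero (inv_ne_zero hdC) (star_ne_zero.mpr (inv_ne_zero hdC))) key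
    · intro e _ he
      simp [he]
    · simp
  · intro b _ hb
    simp [hb]
  · simp
end

section
/- A 4-partite maximally entangled pure state of local dimension d exists whenever d is an odd number at least 3, or a multiple of 4. -/
section Helpers

variable {I : Type*} [Fintype I] [DecidableEq I]

lemma sum_ite_unique' {γ : Type*} [Fintype γ] {P : γ → Prop} [DecidablePred P] (w : ℂ)
    (h : ∃! c, P c) : ∑ c : γ, (if P c then w else 0) = w := by
  obtain ⟨c0, hc0, hu⟩ := h
  rw [Finset.sum_eq_single c0]
  · rw [if_pos hc0]
  · intro b _ hb
    exact if_neg fun hPb => hb (hu b hPb)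
  · intro hc; exact absurd (Finset.mem_univ c0) hc

lemma sum_ite_delta' {γ α : Type*} [Fintype γ] [DecidableEq α] {P : γ → Prop} [DecidablePred P]
    (w : ℂ) (p q : α) (h1 : p = q → ∃! c, P c) (h2 : ∀ c, P c → p = q) :
    ∑ c : γ, (if P c then w else 0) = if p = q then w else 0 := by
  by_cases hpq : p = q
  · rw [if_pos hpq]; exact sum_ite_unique' w (h1 hpq)
  · rw [if_neg hpq]; exact Finset.sum_eq_zero fun c _ => if_neg fun hc => hpq (h2 c hc)

/-- inner collapse when the summation variable is pinned in the second slot of each conjunct -/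
lemma pairSumA {t s : I} {A B : Prop} [Decidable A] [Decidable B] (w : ℂ) :
    ∑ e : I, (if (A ∧ e = t) ∧ (B ∧ e = s) then w else 0)
      = if (A ∧ B) ∧ t = s then w else 0 := by
  by_cases hc : (A ∧ B) ∧ t = s
  · rw [if_pos hc]
    obtain ⟨⟨hA, hB⟩, rfl⟩ := hc
    have he : ∀ e : I, (if (A ∧ e = t) ∧ (B ∧ e = t) then w else 0)
        = if e = t then w else 0 := by
      intro e; by_cases he : e = t <;> simp [he, hA, hB]
    rw [Finset.sum_congr rfl fun e _ => he e]
    simp [Finset.sum_ite_eq']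
  · rw [if_neg hc]
    refine Finset.sum_eq_zero fun e _ => if_neg ?_
    rintro ⟨⟨hA, rfl⟩, hB, h2⟩
    exact hc ⟨⟨hA, hB⟩, h2⟩

/-- inner collapse when the summation variable is pinned in the first slot of each conjunct -/
lemma pairSumB {t s : I} {A B : Prop} [Decidable A] [Decidable B] (w : ℂ) :
    ∑ e : I, (if (e = t ∧ A) ∧ (e = s ∧ B) then w else 0)
      = if (A ∧ B) ∧ t = s then w else 0 := by
  rw [← pairSumA (t := t) (s := s) (A := A) (B := B) w]
  refine Finset.sum_congr rfl fun e _ => ?_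
  congr 1
  exact propext ⟨fun ⟨⟨h1, h2⟩, h3, h4⟩ => ⟨⟨h2, h1⟩, h4, h3⟩,
    fun ⟨⟨h1, h2⟩, h3, h4⟩ => ⟨⟨h2, h1⟩, h4, h3⟩⟩

end Helpers

section Core

variable {I : Type*} [Fintype I] [DecidableEq I]

structure Good (f g : I → I → I) : Prop where
  hfc : ∀ a, Function.Bijective (f a)
  hgc : ∀ a, Function.Bijective (g a)
  hfa : ∀ c, Function.Bijective fun a => f a c
  hga : ∀ c, Function.Bijective fun a => g a c
  hfg : Function.Injective fun p : I × I => (f p.1 p.2, g p.1 p.2)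

noncomputable def gpsi (f g : I → I → I) : I × I × I × I → ℂ := fun q =>
  if q.2.1 = f q.1 q.2.2.1 ∧ q.2.2.2 = g q.1 q.2.2.1 then (Fintype.card I : ℂ)⁻¹ else 0

theorem isMaxEnt_gpsi {f g : I → I → I} (h : Good f g) : IsMaxEnt (gpsi f g) := by
  have hstar : star ((Fintype.card I : ℂ)⁻¹) = (Fintype.card I : ℂ)⁻¹ := by
    rw [star_inv₀, star_natCast]
  have hw : (Fintype.card I : ℂ)⁻¹ * (Fintype.card I : ℂ)⁻¹ = (((Fintype.card I : ℂ)) ^ 2)⁻¹ := by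
    rw [sq, mul_inv]
  refine ⟨?_, ?_, ?_, ?_, ?_, ?_⟩
  · -- red12
    ext ⟨p1, p2⟩ ⟨q1, q2⟩
    simp only [red12, gpsi, Matrix.of_apply, Matrix.smul_apply, Matrix.one_apply, smul_eq_mul,
      apply_ite (star : ℂ → ℂ), star_zero, hstar, ite_mul, mul_ite, mul_zero, zero_mul, ← ite_and]
    rw [Finset.sum_congr rfl fun c _ => pairSumA _]
    rw [sum_ite_delta' _ ((p1, p2) : I × I) (q1, q2) ?pos ?neg]
    · rw [hw]; by_cases hpq : ((p1, p2) : I × I) = (q1, q2) <;> simp [hpq]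
    case pos =>
      rintro h'
      rw [Prod.mk.injEq] at h'
      obtain ⟨rfl, rfl⟩ := h'
      obtain ⟨c0, hc0⟩ := (h.hfc p1).surjective p2
      exact ⟨c0, ⟨⟨hc0.symm, hc0.symm⟩, rfl⟩,
        fun y hy => (h.hfc p1).injective (hy.1.1.symm.trans hc0.symm)⟩
    case neg =>
      rintro c ⟨⟨h1, h2⟩, h3⟩
      have hp1 : p1 = q1 := (h.hga c).injective h3.symm
      subst hp1
      rw [Prod.mk.injEq]
      exact ⟨rfl, h2.trans h1.symm⟩
  · -- red34
    ext ⟨p1, p2⟩ ⟨q1, q2⟩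
    simp only [red34, gpsi, Matrix.of_apply, Matrix.smul_apply, Matrix.one_apply, smul_eq_mul,
      apply_ite (star : ℂ → ℂ), star_zero, hstar, ite_mul, mul_ite, mul_zero, zero_mul, ← ite_and]
    rw [Finset.sum_congr rfl fun a _ => pairSumB _]
    rw [sum_ite_delta' _ ((p1, p2) : I × I) (q1, q2) ?pos ?neg]
    · rw [hw]; by_cases hpq : ((p1, p2) : I × I) = (q1, q2) <;> simp [hpq]
    case pos =>
      rintro h'
      rw [Prod.mk.injEq] at h'
      obtain ⟨rfl, rfl⟩ := h'
      obtain ⟨a0, ha0⟩ := (h.hga p1).surjective p2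
      exact ⟨a0, ⟨⟨ha0.symm, ha0.symm⟩, rfl⟩,
        fun y hy => (h.hga p1).injective (hy.1.1.symm.trans ha0.symm)⟩
    case neg =>
      rintro a ⟨⟨h1, h2⟩, h3⟩
      have hq1 : p1 = q1 := (h.hfc a).injective h3.symm
      subst hq1
      rw [Prod.mk.injEq]
      exact ⟨rfl, h2.trans h1.symm⟩
  · -- red13
    ext ⟨p1, p2⟩ ⟨q1, q2⟩
    simp only [red13, gpsi, Matrix.of_apply, Matrix.smul_apply, Matrix.one_apply, smul_eq_mul,
      apply_ite (star : ℂ → ℂ), star_zero, hstar, ite_mul, mul_ite, mul_zero, zero_mul, ← ite_and]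
    rw [Finset.sum_congr rfl fun b _ => pairSumA _]
    rw [sum_ite_delta' _ ((p1, p2) : I × I) (q1, q2) ?pos ?neg]
    · rw [hw]; by_cases hpq : ((p1, p2) : I × I) = (q1, q2) <;> simp [hpq]
    case pos =>
      rintro h'
      rw [Prod.mk.injEq] at h'
      obtain ⟨rfl, rfl⟩ := h'
      exact ⟨f p1 p2, ⟨⟨rfl, rfl⟩, rfl⟩, fun y hy => hy.1.1⟩
    case neg =>
      rintro b ⟨⟨h1, h2⟩, h3⟩
      have := h.hfg (a₁ := (q1, q2)) (a₂ := (p1, p2)) (by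
        rw [Prod.mk.injEq]; exact ⟨h1.symm.trans h2, h3⟩)
      exact this.symm
  · -- red24
    ext ⟨p1, p2⟩ ⟨q1, q2⟩
    simp only [red24, gpsi, Matrix.of_apply, Matrix.smul_apply, Matrix.one_apply, smul_eq_mul,
      apply_ite (star : ℂ → ℂ), star_zero, hstar, ite_mul, mul_ite, mul_zero, zero_mul, ← ite_and]
    rw [← Finset.sum_product', Finset.univ_product_univ]
    rw [sum_ite_delta' _ ((p1, p2) : I × I) (q1, q2) ?pos ?neg]
    · rw [hw]; by_cases hpq : ((p1, p2) : I × I) = (q1, q2) <;> simp [hpq]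
    case pos =>
      rintro h'
      rw [Prod.mk.injEq] at h'
      obtain ⟨rfl, rfl⟩ := h'
      have hbij : Function.Bijective (fun p : I × I => (f p.1 p.2, g p.1 p.2)) :=
        Finite.injective_iff_bijective.mp h.hfg
      obtain ⟨x0, hx0⟩ := hbij.surjective (p1, p2)
      rw [Prod.mk.injEq] at hx0
      refine ⟨x0, ⟨⟨hx0.1.symm, hx0.2.symm⟩, hx0.1.symm, hx0.2.symm⟩, fun y hy => h.hfg ?_⟩
      rw [Prod.mk.injEq]
      exact ⟨hy.1.1.symm.trans hx0.1.symm, hy.1.2.symm.trans hx0.2.symm⟩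
    case neg =>
      rintro x ⟨⟨h1, h2⟩, h3, h4⟩
      rw [Prod.mk.injEq]
      exact ⟨h3.trans h1.symm, h4.trans h2.symm⟩
  · -- red14
    ext ⟨p1, p2⟩ ⟨q1, q2⟩
    simp only [red14, gpsi, Matrix.of_apply, Matrix.smul_apply, Matrix.one_apply, smul_eq_mul,
      apply_ite (star : ℂ → ℂ), star_zero, hstar, ite_mul, mul_ite, mul_zero, zero_mul, ← ite_and]
    rw [Finset.sum_comm]
    rw [Finset.sum_congr rfl fun c _ => pairSumB _]
    rw [sum_ite_delta' _ ((p1, p2) : I × I) (q1, q2) ?pos ?neg]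
    · rw [hw]; by_cases hpq : ((p1, p2) : I × I) = (q1, q2) <;> simp [hpq]
    case pos =>
      rintro h'
      rw [Prod.mk.injEq] at h'
      obtain ⟨rfl, rfl⟩ := h'
      obtain ⟨c0, hc0⟩ := (h.hgc p1).surjective p2
      exact ⟨c0, ⟨⟨hc0.symm, hc0.symm⟩, rfl⟩,
        fun y hy => (h.hgc p1).injective (hy.1.1.symm.trans hc0.symm)⟩
    case neg =>
      rintro c ⟨⟨h1, h2⟩, h3⟩
      have hq1 : p1 = q1 := (h.hfa c).injective h3.symm
      subst hq1
      rw [Prod.mk.injEq]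
      exact ⟨rfl, h2.trans h1.symm⟩
  · -- red23
    ext ⟨p1, p2⟩ ⟨q1, q2⟩
    simp only [red23, gpsi, Matrix.of_apply, Matrix.smul_apply, Matrix.one_apply, smul_eq_mul,
      apply_ite (star : ℂ → ℂ), star_zero, hstar, ite_mul, mul_ite, mul_zero, zero_mul, ← ite_and]
    rw [Finset.sum_congr rfl fun a _ => pairSumA _]
    rw [sum_ite_delta' _ ((p1, p2) : I × I) (q1, q2) ?pos ?neg]
    · rw [hw]; by_cases hpq : ((p1, p2) : I × I) = (q1, q2) <;> simp [hpq]
    case pos =>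
      rintro h'
      rw [Prod.mk.injEq] at h'
      obtain ⟨rfl, rfl⟩ := h'
      obtain ⟨a0, ha0⟩ := (h.hfa p2).surjective p1
      exact ⟨a0, ⟨⟨ha0.symm, ha0.symm⟩, rfl⟩,
        fun y hy => (h.hfa p2).injective (hy.1.1.symm.trans ha0.symm)⟩
    case neg =>
      rintro a ⟨⟨h1, h2⟩, h3⟩
      have hq2 : p2 = q2 := (h.hgc a).injective h3.symm
      subst hq2
      rw [Prod.mk.injEq]
      exact ⟨h2.trans h1.symm, rfl⟩

end Core

section Transport

variable {I J : Type*} [Fintype I] [DecidableEq I] [Fintype J] [DecidableEq J]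

theorem isMaxEnt_comp (eqv : J ≃ I) {ψ : I × I × I × I → ℂ} (h : IsMaxEnt ψ) :
    IsMaxEnt fun x : J × J × J × J => ψ (eqv x.1, eqv x.2.1, eqv x.2.2.1, eqv x.2.2.2) := by
  have hcard : (Fintype.card J : ℂ) = (Fintype.card I : ℂ) := by rw [Fintype.card_congr eqv]
  obtain ⟨h12, h34, h13, h24, h14, h23⟩ := h
  refine ⟨?_, ?_, ?_, ?_, ?_, ?_⟩
  · ext ⟨p1, p2⟩ ⟨q1, q2⟩
    have key : red12 (fun x : J × J × J × J => ψ (eqv x.1, eqv x.2.1, eqv x.2.2.1, eqv x.2.2.2))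
        (p1, p2) (q1, q2) = red12 ψ (eqv p1, eqv p2) (eqv q1, eqv q2) := by
      simp only [red12, Matrix.of_apply]
      exact Fintype.sum_equiv eqv _ _ fun c => Fintype.sum_equiv eqv _ _ fun e => rfl
    rw [key, h12]
    simp [Matrix.one_apply, Prod.mk.injEq, eqv.injective.eq_iff, hcard]
  · ext ⟨p1, p2⟩ ⟨q1, q2⟩
    have key : red34 (fun x : J × J × J × J => ψ (eqv x.1, eqv x.2.1, eqv x.2.2.1, eqv x.2.2.2))
        (p1, p2) (q1, q2) = red34 ψ (eqv p1, eqv p2) (eqv q1, eqv q2) := by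
      simp only [red34, Matrix.of_apply]
      exact Fintype.sum_equiv eqv _ _ fun c => Fintype.sum_equiv eqv _ _ fun e => rfl
    rw [key, h34]
    simp [Matrix.one_apply, Prod.mk.injEq, eqv.injective.eq_iff, hcard]
  · ext ⟨p1, p2⟩ ⟨q1, q2⟩
    have key : red13 (fun x : J × J × J × J => ψ (eqv x.1, eqv x.2.1, eqv x.2.2.1, eqv x.2.2.2))
        (p1, p2) (q1, q2) = red13 ψ (eqv p1, eqv p2) (eqv q1, eqv q2) := by
      simp only [red13, Matrix.of_apply]
      exact Fintype.sum_equiv eqv _ _ fun c => Fintype.sum_equiv eqv _ _ fun e => rfl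
    rw [key, h13]
    simp [Matrix.one_apply, Prod.mk.injEq, eqv.injective.eq_iff, hcard]
  · ext ⟨p1, p2⟩ ⟨q1, q2⟩
    have key : red24 (fun x : J × J × J × J => ψ (eqv x.1, eqv x.2.1, eqv x.2.2.1, eqv x.2.2.2))
        (p1, p2) (q1, q2) = red24 ψ (eqv p1, eqv p2) (eqv q1, eqv q2) := by
      simp only [red24, Matrix.of_apply]
      exact Fintype.sum_equiv eqv _ _ fun c => Fintype.sum_equiv eqv _ _ fun e => rfl
    rw [key, h24]
    simp [Matrix.one_apply, Prod.mk.injEq, eqv.injective.eq_iff, hcard]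
  · ext ⟨p1, p2⟩ ⟨q1, q2⟩
    have key : red14 (fun x : J × J × J × J => ψ (eqv x.1, eqv x.2.1, eqv x.2.2.1, eqv x.2.2.2))
        (p1, p2) (q1, q2) = red14 ψ (eqv p1, eqv p2) (eqv q1, eqv q2) := by
      simp only [red14, Matrix.of_apply]
      exact Fintype.sum_equiv eqv _ _ fun c => Fintype.sum_equiv eqv _ _ fun e => rfl
    rw [key, h14]
    simp [Matrix.one_apply, Prod.mk.injEq, eqv.injective.eq_iff, hcard]
  · ext ⟨p1, p2⟩ ⟨q1, q2⟩
    have key : red23 (fun x : J × J × J × J => ψ (eqv x.1, eqv x.2.1, eqv x.2.2.1, eqv x.2.2.2))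
        (p1, p2) (q1, q2) = red23 ψ (eqv p1, eqv p2) (eqv q1, eqv q2) := by
      simp only [red23, Matrix.of_apply]
      exact Fintype.sum_equiv eqv _ _ fun c => Fintype.sum_equiv eqv _ _ fun e => rfl
    rw [key, h23]
    simp [Matrix.one_apply, Prod.mk.injEq, eqv.injective.eq_iff, hcard]

end Transport

section Instances

lemma good_zmod (m : ℕ) [NeZero m] (hm : Odd m) :
    Good (fun a c : ZMod m => a - c) (fun a c => a + c) := by
  have h2 : IsUnit (2 : ZMod m) := by
    have hco : Nat.Coprime 2 m :=
      (Nat.Prime.coprime_iff_not_dvd Nat.prime_two).mpr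
        (by have := Nat.odd_iff.mp hm; omega)
    have := (ZMod.isUnit_iff_coprime 2 m).mpr hco
    simpa using this
  refine ⟨?_, ?_, ?_, ?_, ?_⟩
  · intro a; exact Finite.injective_iff_bijective.mp sub_right_injective
  · intro a; exact Finite.injective_iff_bijective.mp (add_right_injective a)
  · intro c; exact Finite.injective_iff_bijective.mp sub_left_injective
  · intro c; exact Finite.injective_iff_bijective.mp (add_left_injective c)
  · rintro ⟨a, c⟩ ⟨a', c'⟩ hh
    rw [Prod.mk.injEq] at hh ⊢
    obtain ⟨e1, e2⟩ := hh
    have ha : (2 : ZMod m) * a = 2 * a' := by linear_combination e1 + e2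
    have hc : (2 : ZMod m) * c = 2 * c' := by linear_combination e2 - e1
    exact ⟨h2.mul_left_cancel ha, h2.mul_left_cancel hc⟩

lemma good_field {K : Type*} [Field K] [Fintype K] [DecidableEq K] {r : K}
    (h0 : r ≠ 0) (h1 : r ≠ 1) :
    Good (fun a c : K => a + r * c) (fun a c => a + c) := by
  refine ⟨?_, ?_, ?_, ?_, ?_⟩
  · intro a
    refine Finite.injective_iff_bijective.mp fun x y hxy => ?_
    exact mul_left_cancel₀ h0 (add_left_cancel hxy)
  · intro a; exact Finite.injective_iff_bijective.mp (add_right_injective a)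
  · intro c
    refine Finite.injective_iff_bijective.mp fun x y hxy => ?_
    exact add_right_cancel hxy
  · intro c
    refine Finite.injective_iff_bijective.mp fun x y hxy => ?_
    exact add_right_cancel hxy
  · rintro ⟨a, c⟩ ⟨a', c'⟩ hh
    rw [Prod.mk.injEq] at hh ⊢
    obtain ⟨e1, e2⟩ := hh
    have hc : c = c' := by
      have h' : (r - 1) * (c - c') = 0 := by linear_combination e1 - e2
      have := mul_eq_zero.mp h'
      rcases this with h' | h'
      · exact absurd (sub_eq_zero.mp h') h1
      · exact sub_eq_zero.mp h'
    subst hc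
    exact ⟨add_right_cancel e2, rfl⟩

lemma good_prod {I J : Type*} [Fintype I] [DecidableEq I] [Fintype J] [DecidableEq J]
    {f1 g1 : I → I → I} {f2 g2 : J → J → J} (h1 : Good f1 g1) (h2 : Good f2 g2) :
    Good (fun a c : I × J => ((f1 a.1 c.1, f2 a.2 c.2) : I × J))
      (fun a c => (g1 a.1 c.1, g2 a.2 c.2)) := by
  refine ⟨?_, ?_, ?_, ?_, ?_⟩
  · intro a
    refine Finite.injective_iff_bijective.mp ?_
    rintro ⟨x1, x2⟩ ⟨y1, y2⟩ hxy
    rw [Prod.mk.injEq] at hxy ⊢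
    exact ⟨(h1.hfc a.1).injective hxy.1, (h2.hfc a.2).injective hxy.2⟩
  · intro a
    refine Finite.injective_iff_bijective.mp ?_
    rintro ⟨x1, x2⟩ ⟨y1, y2⟩ hxy
    rw [Prod.mk.injEq] at hxy ⊢
    exact ⟨(h1.hgc a.1).injective hxy.1, (h2.hgc a.2).injective hxy.2⟩
  · intro c
    refine Finite.injective_iff_bijective.mp ?_
    rintro ⟨x1, x2⟩ ⟨y1, y2⟩ hxy
    rw [Prod.mk.injEq] at hxy ⊢
    exact ⟨(h1.hfa c.1).injective hxy.1, (h2.hfa c.2).injective hxy.2⟩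
  · intro c
    refine Finite.injective_iff_bijective.mp ?_
    rintro ⟨x1, x2⟩ ⟨y1, y2⟩ hxy
    rw [Prod.mk.injEq] at hxy ⊢
    exact ⟨(h1.hga c.1).injective hxy.1, (h2.hga c.2).injective hxy.2⟩
  · rintro ⟨⟨a1, a2⟩, ⟨c1, c2⟩⟩ ⟨⟨a1', a2'⟩, ⟨c1', c2'⟩⟩ hh
    simp only [Prod.mk.injEq] at hh ⊢
    have hI : ((a1, c1) : I × I) = (a1', c1') := h1.hfg (by
      rw [Prod.mk.injEq]; exact ⟨hh.1.1, hh.2.1⟩)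
    have hJ : ((a2, c2) : J × J) = (a2', c2') := h2.hfg (by
      rw [Prod.mk.injEq]; exact ⟨hh.1.2, hh.2.2⟩)
    rw [Prod.mk.injEq] at hI hJ
    exact ⟨⟨hI.1, hJ.1⟩, hI.2, hJ.2⟩

end Instances

theorem exists_maxEnt_of_odd_or_multiple_four (d : ℕ)
    (h : (Odd d ∧ 3 ≤ d) ∨ 4 ∣ d) :
    ∃ ψ : Fin d × Fin d × Fin d × Fin d → ℂ, IsMaxEnt ψ := by
  by_cases hd : d = 0
  · subst hd
    refine ⟨fun _ => 0, ?_, ?_, ?_, ?_, ?_, ?_⟩ <;>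
      · ext p q; exact p.1.elim0
  rcases h with ⟨hodd, _⟩ | hdvd
  · haveI : NeZero d := ⟨hd⟩
    have eqv : Fin d ≃ ZMod d := Fintype.equivOfCardEq (by simp [ZMod.card])
    exact ⟨_, isMaxEnt_comp eqv (isMaxEnt_gpsi (good_zmod d hodd))⟩
  · haveI : Fact (Nat.Prime 2) := ⟨Nat.prime_two⟩
    set k := d.factorization 2 with hk
    set m := d / 2 ^ k with hmdef
    have hk2 : 2 ≤ k :=
      (Nat.Prime.pow_dvd_iff_le_factorization Nat.prime_two hd).mp (by
        have : (4 : ℕ) = 2 ^ 2 := by norm_num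
        rwa [this] at hdvd)
    have hm_odd : Odd m := by
      have h2m : ¬ 2 ∣ m := by
        rw [hmdef, hk]; exact Nat.not_dvd_ordCompl Nat.prime_two hd
      rw [Nat.odd_iff]
      omega
    haveI : NeZero m := ⟨(Nat.ordCompl_pos 2 hd).ne'⟩
    haveI : Fintype (GaloisField 2 k) := Fintype.ofFinite _
    haveI : DecidableEq (GaloisField 2 k) := Classical.decEq _
    have hcardK : Fintype.card (GaloisField 2 k) = 2 ^ k := by
      rw [Fintype.card_eq_nat_card]; exact GaloisField.card 2 k (by omega)
    have hrex : (({0, 1} : Finset (GaloisField 2 k))ᶜ).Nonempty := by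
      rw [← Finset.card_pos, Finset.card_compl, hcardK]
      have h01 : ({0, 1} : Finset (GaloisField 2 k)).card ≤ 2 := by
        apply le_trans (Finset.card_insert_le _ _)
        simp
      have : (4 : ℕ) ≤ 2 ^ k := by
        calc (4 : ℕ) = 2 ^ 2 := by norm_num
        _ ≤ 2 ^ k := Nat.pow_le_pow_right (by norm_num) hk2
      omega
    obtain ⟨r, hr⟩ := hrex
    rw [Finset.mem_compl, Finset.mem_insert, Finset.mem_singleton] at hr
    push_neg at hr
    have good := good_prod (good_zmod m hm_odd) (good_field hr.1 hr.2)
    have eqv : Fin d ≃ ZMod m × GaloisField 2 k := Fintype.equivOfCardEq (by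
      rw [Fintype.card_fin, Fintype.card_prod, ZMod.card, hcardK, mul_comm]
      exact (Nat.ordProj_mul_ordCompl_eq_self d 2).symm)
    exact ⟨_, isMaxEnt_comp eqv (isMaxEnt_gpsi good)⟩
end
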